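/- arXiv:2012.11084 — 8 statements merged into one kernel-verified Lean document; each statement's English description precedes it below -/
import Mathlib

section
/- Let R be an associative unital ring, P a left R-module, and 𝒟 = (B, (f_b)_{b∈B}) a dual basis for P. If M is a submodule of P that is closed under 𝒟-supports, then both M and the quotient module P/M are projective R-modules. -/
/-!
STATEMENT 0: If `M` is a submodule of `P` closed under `𝒟`-supports, where `𝒟` is a dual
basis for `P`, then both `M` and `P ⧸ M` are projective.
-/

universe u v

/-- A dual basis for the `R`-module `P`: a set `B ⊆ P` together with linear functionals
`f_b : P →ₗ[R] R` for `b ∈ B`, such that each `x : P` has finite support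
`{b ∈ B : f_b x ≠ 0}` and `x = ∑_{b ∈ sprt(x)} f_b x • b`. -/
structure DualBasis (R : Type u) [Ring R] (P : Type v) [AddCommGroup P] [Module R P] where
  carrier : Set P
  coord : carrier → (P →ₗ[R] R)
  finite_support : ∀ x : P, {b : carrier | coord b x ≠ 0}.Finite
  sum_repr : ∀ x : P, x = ∑ᶠ b : carrier, coord b x • (b : P)

/-- A submodule `M ≤ P` is closed under `𝒟`-supports if for every `x ∈ M`, every `b ∈ B`
with `f_b x ≠ 0` belongs to `M`. -/
def DualBasis.ClosedUnderSupports {R : Type u} [Ring R] {P : Type v} [AddCommGroup P]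
    [Module R P] (D : DualBasis R P) (M : Submodule R P) : Prop :=
  ∀ x ∈ M, ∀ b : D.carrier, D.coord b x ≠ 0 → (b : P) ∈ M

namespace DualBasis

variable {R : Type u} [Ring R] {P : Type v} [AddCommGroup P] [Module R P] (D : DualBasis R P)

/-- The coordinates of `x` with respect to the dual basis, as a finitely supported function. -/
noncomputable def coords : P →ₗ[R] (D.carrier →₀ R) where
  toFun x := Finsupp.onFinset (D.finite_support x).toFinset (fun b => D.coord b x)
    (fun b hb => (D.finite_support x).mem_toFinset.2 hb)
  map_add' x y := by ext b; simp
  map_smul' r x := by ext b; simp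

@[simp] lemma coords_apply (x : P) (b : D.carrier) : D.coords x b = D.coord b x := rfl

lemma sum_coords (x : P) :
    ∑ b ∈ (D.coords x).support, D.coord b x • (b : P) = x := by
  conv_rhs => rw [D.sum_repr x]
  refine (finsum_eq_finset_sum_of_support_subset _ ?_).symm
  intro b hb
  simp only [Function.mem_support] at hb
  simp only [Finset.mem_coe, Finsupp.mem_support_iff, coords_apply]
  intro h
  exact hb (by rw [h, zero_smul])

end DualBasis

theorem projective_of_closedUnderSupports {R : Type u} [Ring R] {P : Type v}
    [AddCommGroup P] [Module R P] (D : DualBasis R P) (M : Submodule R P)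
    (hM : D.ClosedUnderSupports M) :
    Module.Projective R M ∧ Module.Projective R (P ⧸ M) := by
  classical
  constructor
  · rw [Module.projective_def']
    refine ⟨Finsupp.lmapDomain R R
        (fun b : {b : D.carrier // (b : P) ∈ M} => (⟨(b : P), b.2⟩ : M)) ∘ₗ
      Finsupp.lsubtypeDomain {b : D.carrier | (b : P) ∈ M} ∘ₗ D.coords ∘ₗ M.subtype, ?_⟩
    ext x
    simp only [LinearMap.coe_comp, Function.comp_apply, LinearMap.id_apply,
      Finsupp.lmapDomain_apply, Finsupp.lsubtypeDomain_apply,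
      Finsupp.linearCombination_mapDomain]
    rw [Finsupp.linearCombination_apply, Finsupp.sum, AddSubmonoidClass.coe_finset_sum]
    simp only [SetLike.val_smul, Function.comp_apply, id_eq]
    erw [Finsupp.support_subtypeDomain]
    erw [Finset.sum_subtype_eq_sum_filter
      (fun b : D.carrier => D.coords (M.subtype x) b • (b : P))]
    rw [Finset.filter_true_of_mem (s := (D.coords (M.subtype x)).support)
      (p := fun b : D.carrier => b ∈ {b : D.carrier | (b : P) ∈ M})
      (fun b hb => hM x x.2 b (Finsupp.mem_support_iff.1 hb))]
    simpa using D.sum_coords (x : P)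
  · rw [Module.projective_def']
    set p : Set D.carrier := {b : D.carrier | (b : P) ∉ M} with hp
    set g : P →ₗ[R] ((P ⧸ M) →₀ R) :=
      Finsupp.lmapDomain R R (fun b : p => Submodule.Quotient.mk (b : P)) ∘ₗ
        Finsupp.lsubtypeDomain p ∘ₗ D.coords with hg
    have hker : M ≤ LinearMap.ker g := by
      intro x hx
      simp only [LinearMap.mem_ker, hg, LinearMap.coe_comp, Function.comp_apply,
        Finsupp.lsubtypeDomain_apply]
      have : Finsupp.subtypeDomain (fun b : D.carrier => b ∈ p) (D.coords x) = 0 := by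
        ext b
        simp only [Finsupp.subtypeDomain_apply, Finsupp.coe_zero, Pi.zero_apply,
          DualBasis.coords_apply]
        by_contra h
        exact b.2 (hM x hx b h)
      rw [this, map_zero]
    refine ⟨M.liftQ g hker, ?_⟩
    ext x
    simp only [LinearMap.coe_comp, Function.comp_apply, LinearMap.id_apply,
      Submodule.mkQ_apply, Submodule.liftQ_apply, hg, Finsupp.lmapDomain_apply,
      Finsupp.lsubtypeDomain_apply, Finsupp.linearCombination_mapDomain]
    rw [Finsupp.linearCombination_apply, Finsupp.sum, Finsupp.support_subtypeDomain]
    simp only [Finsupp.subtypeDomain_apply, Function.comp_apply, id_eq]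
    rw [Finset.sum_subtype_eq_sum_filter
      (fun b : D.carrier => D.coords x b • (Submodule.Quotient.mk (b : P) : P ⧸ M))]
    rw [Finset.sum_filter_of_ne]
    · have := congrArg (M.mkQ) (D.sum_coords x)
      rw [map_sum] at this
      simpa using this
    · intro b _ hb
      by_contra hbp
      apply hb
      have hbM : (b : P) ∈ M := not_not.1 hbp
      rw [← Submodule.mkQ_apply, ← map_smul, Submodule.mkQ_apply,
        Submodule.Quotient.mk_eq_zero]
      exact M.smul_mem _ hbM
end

section
/- Let R be an associative unital ring, P a left R-module, and 𝒟 = (B, (f_b)_{b∈B}) a dual basis for P. If S ⊆ P is a subset such that sprt_𝒟(s) ⊆ S for every s ∈ S, then the submodule span_R(S) generated by S is closed under 𝒟-supports; consequently both span_R(S) and P/span_R(S) are projective R-modules. -/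
universe u v

section Aux

variable {R : Type u} [Ring R] {P : Type v} [AddCommGroup P] [Module R P]

/-- A module with a dual basis is projective. -/
theorem DualBasis.projective (D : DualBasis R P) : Module.Projective R P := by
  rw [Module.projective_def']
  have hfin : ∀ x : P,
      (Function.support fun b : D.carrier => Finsupp.single (b : P) (D.coord b x)).Finite := by
    intro x
    refine (D.finite_support x).subset ?_
    intro b hb
    simp only [Function.mem_support] at hb
    intro h
    apply hb
    rw [h, Finsupp.single_zero]
  refine ⟨{ toFun := fun x => ∑ᶠ b : D.carrier, Finsupp.single (b : P) (D.coord b x)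
            map_add' := ?_
            map_smul' := ?_ }, ?_⟩
  · intro x y
    rw [← finsum_add_distrib (hfin x) (hfin y)]
    exact finsum_congr fun b => by rw [map_add, Finsupp.single_add]
  · intro r x
    simp only [RingHom.id_apply]
    rw [smul_finsum' r (hfin x)]
    exact finsum_congr fun b => by rw [map_smul, Finsupp.smul_single]
  · ext x
    simp only [LinearMap.coe_comp, LinearMap.coe_mk, AddHom.coe_mk, Function.comp_apply,
      LinearMap.id_apply]
    have hmap := (Finsupp.linearCombination R (id : P → P)).toAddMonoidHom.map_finsum (hfin x)
    simp only [LinearMap.toAddMonoidHom_coe] at hmap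
    rw [hmap]
    have hterm : ∀ b : D.carrier,
        Finsupp.linearCombination R (id : P → P)
          (Finsupp.single (b : P) (D.coord b x)) = D.coord b x • (b : P) := by
      intro b
      simp [Finsupp.linearCombination_single]
    rw [finsum_congr hterm]
    exact (D.sum_repr x).symm

/-- A submodule closed under supports is a direct summand: the canonical projection. -/
theorem DualBasis.exists_projection (D : DualBasis R P) (M : Submodule R P)
    (hM : D.ClosedUnderSupports M) :
    ∃ π : P →ₗ[R] P, (∀ x, π x ∈ M) ∧ (∀ x ∈ M, π x = x) := by
  classical
  set g : P → D.carrier → P := fun x b => if (b : P) ∈ M then D.coord b x • (b : P) else 0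
  have hfin : ∀ x : P, (Function.support (g x)).Finite := by
    intro x
    refine (D.finite_support x).subset ?_
    intro b hb
    simp only [Function.mem_support, g] at hb
    intro h
    apply hb
    rw [h]
    simp
  refine ⟨{ toFun := fun x => ∑ᶠ b : D.carrier, g x b
            map_add' := ?_
            map_smul' := ?_ }, ?_, ?_⟩
  · intro x y
    rw [← finsum_add_distrib (hfin x) (hfin y)]
    refine finsum_congr fun b => ?_
    simp only [g, map_add]
    split <;> simp [add_smul]
  · intro r x
    simp only [RingHom.id_apply]
    rw [smul_finsum' r (hfin x)]
    refine finsum_congr fun b => ?_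
    simp only [g, map_smul, smul_eq_mul]
    split <;> simp [mul_smul]
  · intro x
    simp only [LinearMap.coe_mk, AddHom.coe_mk]
    rw [finsum_eq_sum (g x) (hfin x)]
    refine Submodule.sum_mem M ?_
    intro b _
    simp only [g]
    split
    · exact Submodule.smul_mem M _ (by assumption)
    · exact Submodule.zero_mem M
  · intro x hx
    simp only [LinearMap.coe_mk, AddHom.coe_mk]
    have hg : ∀ b : D.carrier, g x b = D.coord b x • (b : P) := by
      intro b
      simp only [g]
      split
      · rfl
      · rename_i h
        by_cases hc : D.coord b x = 0
        · rw [hc, zero_smul]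
        · exact absurd (hM x hx b hc) h
    rw [finsum_congr hg]
    exact (D.sum_repr x).symm

end Aux

/-- if `S ⊆ P` satisfies `sprt_𝒟(s) ⊆ S` for all `s ∈ S`, then the
submodule `span R S` is closed under `𝒟`-supports; consequently both `span R S` and
`P ⧸ span R S` are projective. -/
theorem span_closedUnderSupports_and_projective {R : Type u} [Ring R] {P : Type v}
    [AddCommGroup P] [Module R P] (D : DualBasis R P) (S : Set P)
    (hS : ∀ s ∈ S, ∀ b : D.carrier, D.coord b s ≠ 0 → (b : P) ∈ S) :
    D.ClosedUnderSupports (Submodule.span R S) ∧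
      Module.Projective R (Submodule.span R S) ∧
      Module.Projective R (P ⧸ Submodule.span R S) := by
  set M := Submodule.span R S with hMdef
  -- the set of elements whose support lies in `M` is a submodule containing `S`
  have hclosed : D.ClosedUnderSupports M := by
    set N : Submodule R P :=
      { carrier := {x : P | ∀ b : D.carrier, D.coord b x ≠ 0 → (b : P) ∈ M}
        add_mem' := by
          intro x y hx hy b hb
          by_cases hbx : D.coord b x ≠ 0
          · exact hx b hbx
          · push_neg at hbx
            refine hy b ?_
            intro hby
            apply hb
            rw [map_add, hbx, hby, add_zero]
        zero_mem' := by
          intro b hb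
          exact absurd (map_zero (D.coord b)) hb
        smul_mem' := by
          intro r x hx b hb
          refine hx b ?_
          intro h
          apply hb
          rw [map_smul, h, smul_eq_mul, mul_zero] } with hNdef
    have hSN : S ⊆ N := by
      intro s hs b hb
      exact Submodule.subset_span (hS s hs b hb)
    have hspan : M ≤ N := Submodule.span_le.mpr hSN
    intro x hx b hb
    exact hspan hx b hb
  refine ⟨hclosed, ?_, ?_⟩
  all_goals {
    haveI : Module.Projective R P := D.projective
    obtain ⟨π, hπmem, hπid⟩ := D.exists_projection M hclosed
    first
    | -- projectivity of the submodule
      exact Module.Projective.of_split M.subtype (π.codRestrict M hπmem)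
        (by ext x; exact hπid x x.2)
    | -- projectivity of the quotient
      exact Module.Projective.of_split
        (Submodule.liftQ M (LinearMap.id - π)
          (fun x hx => by simp [LinearMap.sub_apply, hπid x hx]))
        M.mkQ
        (by
          refine Submodule.linearMap_qext _ ?_
          ext x
          simp [Submodule.liftQ_apply, LinearMap.sub_apply,
            (Submodule.Quotient.mk_eq_zero M).mpr (hπmem x)])
  }
end

section
/- Let R be an associative unital ring, P a left R-module, and 𝒟 = (B, (f_b)_{b∈B}) a dual basis for P. If M ⊆ M′ are submodules of P that are both closed under 𝒟-supports, then the quotient module M′/M is projective. -/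
universe u v

/-- if `M ⊆ M'` are submodules of `P` both closed under `𝒟`-supports,
then the quotient module `M' ⧸ M` is projective. -/
theorem projective_quotient_of_closedUnderSupports {R : Type u} [Ring R] {P : Type v}
    [AddCommGroup P] [Module R P] (D : DualBasis R P) (M M' : Submodule R P)
    (hMM' : M ≤ M') (hM : D.ClosedUnderSupports M) (hM' : D.ClosedUnderSupports M') :
    Module.Projective R (M' ⧸ M.comap M'.subtype) := by
  classical
  set N := M.comap M'.subtype with hN
  -- the coordinate map, with coordinates of elements of `M` killed
  have memsupp : ∀ (x : P) (b : D.carrier),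
      b ∈ ((D.finite_support x).toFinset.filter (fun b : D.carrier => ¬ ((b : P) ∈ M))) ↔
        (if (b : P) ∈ M then 0 else D.coord b x) ≠ 0 := by
    intro x b
    simp only [Finset.mem_filter, Set.Finite.mem_toFinset, Set.mem_setOf_eq]
    split_ifs with h <;> simp [h]
  let c : P →ₗ[R] (D.carrier →₀ R) :=
    { toFun := fun x =>
        ⟨(D.finite_support x).toFinset.filter (fun b : D.carrier => ¬ ((b : P) ∈ M)),
          fun b => if (b : P) ∈ M then 0 else D.coord b x, memsupp x⟩
      map_add' := by
        intro x y
        ext b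
        show (if (b : P) ∈ M then 0 else D.coord b (x + y)) = _ + _
        rw [show ((⟨_, _, memsupp x⟩ : D.carrier →₀ R) b) =
          (if (b : P) ∈ M then 0 else D.coord b x) from rfl]
        rw [show ((⟨_, _, memsupp y⟩ : D.carrier →₀ R) b) =
          (if (b : P) ∈ M then 0 else D.coord b y) from rfl]
        split_ifs <;> simp
      map_smul' := by
        intro r x
        ext b
        show (if (b : P) ∈ M then 0 else D.coord b (r • x)) = r • _
        rw [show ((⟨_, _, memsupp x⟩ : D.carrier →₀ R) b) =
          (if (b : P) ∈ M then 0 else D.coord b x) from rfl]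
        split_ifs <;> simp }
  have hc : ∀ (x : P) (b : D.carrier),
      c x b = if (b : P) ∈ M then 0 else D.coord b x := fun _ _ => rfl
  -- the target elements
  let w : D.carrier → M' := fun b => if h : (b : P) ∈ M' then ⟨b, h⟩ else 0
  have hw : ∀ (b : D.carrier) (h : (b : P) ∈ M'), w b = ⟨b, h⟩ := fun b h => dif_pos h
  let v : D.carrier → (M' ⧸ N) := fun b => N.mkQ (w b)
  have hv : ∀ b, v b = N.mkQ (w b) := fun _ => rfl
  let φ : (D.carrier →₀ R) →ₗ[R] (M' ⧸ N) := Finsupp.linearCombination R v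
  -- the section
  have hker : ∀ x : M', (x : P) ∈ M → c (x : P) = 0 := by
    intro x hx
    ext b
    rw [hc, Finsupp.coe_zero, Pi.zero_apply]
    split_ifs with h
    · rfl
    · by_contra hne
      exact h (hM x hx b hne)
  let s : (M' ⧸ N) →ₗ[R] (D.carrier →₀ R) :=
    N.liftQ (c.comp M'.subtype) (by
      intro x hx
      simpa using hker x hx)
  refine Module.Projective.of_split s φ ?_
  refine Submodule.linearMap_qext N ?_
  ext x
  simp only [LinearMap.comp_apply, Submodule.mkQ_apply]
  have hs : s (Submodule.Quotient.mk x) = c (x : P) := by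
    simp [s, Submodule.liftQ_apply]
  rw [hs]
  -- compute φ (c x)
  set T := (D.finite_support (x : P)).toFinset with hT
  have hsub : (c (x : P)).support ⊆ T := by
    intro b hb
    rw [Finsupp.mem_support_iff, hc] at hb
    rw [hT]
    simp only [Set.Finite.mem_toFinset, Set.mem_setOf_eq]
    intro h0
    apply hb
    split_ifs <;> simp [h0]
  have hφ : φ (c (x : P)) = ∑ b ∈ T, (c (x : P)) b • v b := by
    rw [show φ (c (x : P)) = Finsupp.linearCombination R v (c (x : P)) from rfl]
    rw [Finsupp.linearCombination_apply, Finsupp.sum]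
    exact Finset.sum_subset hsub (by
      intro b _ hb
      rw [Finsupp.notMem_support_iff.mp hb, zero_smul])
  rw [hφ]
  -- each term with b ∈ M contributes 0, since then v b = 0
  have hterm : ∀ b ∈ T, (c (x : P)) b • v b = D.coord b (x : P) • v b := by
    intro b _
    rw [hc]
    split_ifs with h
    · have hb' : (b : P) ∈ M' := hMM' h
      have hv0 : v b = 0 := by
        rw [hv, hw b hb', Submodule.mkQ_apply, Submodule.Quotient.mk_eq_zero]
        exact h
      rw [hv0, smul_zero, smul_zero]
    · rfl
  rw [Finset.sum_congr rfl hterm]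
  -- now show ∑ b ∈ T, coord b x • v b = mk x
  have hxM' : ∀ b ∈ T, D.coord b (x : P) ≠ 0 := by
    intro b hb
    rw [hT] at hb
    simpa using hb
  have hsum : (x : P) = ∑ b ∈ T, D.coord b (x : P) • ((w b : M') : P) := by
    have h1 : (x : P) = ∑ᶠ b : D.carrier, D.coord b (x : P) • (b : P) := D.sum_repr _
    have h2 : ∑ᶠ b : D.carrier, D.coord b (x : P) • (b : P)
        = ∑ b ∈ T, D.coord b (x : P) • (b : P) := by
      apply finsum_eq_sum_of_support_subset
      intro b hb
      rw [hT]
      simp only [Set.Finite.coe_toFinset, Set.mem_setOf_eq]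
      intro h0
      apply hb
      simp [Function.mem_support, h0]
    calc (x : P) = ∑ᶠ b : D.carrier, D.coord b (x : P) • (b : P) := h1
      _ = ∑ b ∈ T, D.coord b (x : P) • (b : P) := h2
      _ = ∑ b ∈ T, D.coord b (x : P) • ((w b : M') : P) := by
          apply Finset.sum_congr rfl
          intro b hb
          have hbM' : (b : P) ∈ M' := hM' (x : P) x.2 b (hxM' b hb)
          rw [hw b hbM']
  have hxeq : (x : M') = ∑ b ∈ T, D.coord b (x : P) • w b := by
    apply Subtype.ext
    rw [AddSubmonoidClass.coe_finset_sum]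
    simp only [SetLike.val_smul]
    exact hsum
  calc ∑ b ∈ T, D.coord b (x : P) • v b
      = N.mkQ (∑ b ∈ T, D.coord b (x : P) • w b) := by
        rw [map_sum]
        apply Finset.sum_congr rfl
        intro b _
        rw [map_smul, hv]
    _ = Submodule.Quotient.mk x := by rw [← hxeq]; rfl
end

section
/- Let R be an associative unital ring, Q a projective left R-module, μ an infinite cardinal, and Y ⊆ Q a subset of cardinality at most μ. Then there exists a submodule Q′ of Q such that Y ⊆ Q′, Q′ is ≤μ-generated, and both Q′ and Q/Q′ are projective R-modules. -/
/-!
Kaplansky's closure argument. A projective `Q` has a section `s` of the canonical surjection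
`p : (Q →₀ R) → Q`. Closing `Y` under `q ↦ supp (s q)` gives a set `K` of size at most `μ`
with `s (span K) ⊆ R^(K)` and `p (R^(K)) = span K`. So `s` and `p` exhibit `span K` as a
retract of `R^(K)`, and `Q ⧸ span K` as a retract of `(Q →₀ R) ⧸ R^(K) ≅ R^(Kᶜ)`.
-/

universe u v

open Cardinal

theorem Cardinal.exists_superset_card_le_forall_subset {α : Type v} {μ : Cardinal.{v}}
    (hμ : ℵ₀ ≤ μ) (g : α → Set α) (hg : ∀ a, #(g a) ≤ μ) {Y : Set α} (hY : #Y ≤ μ) :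
    ∃ K : Set α, Y ⊆ K ∧ #K ≤ μ ∧ ∀ a ∈ K, g a ⊆ K := by
  let step : Set α → Set α := fun S => S ∪ ⋃ a ∈ S, g a
  have card_step : ∀ S : Set α, #S ≤ μ → #(step S) ≤ μ := fun S hS =>
    (mk_union_le _ _).trans <| add_le_of_le hμ hS <|
      (mk_biUnion_le _ _).trans <| mul_le_of_le hμ hS <| ciSup_le' fun a => hg a
  have card_iterate : ∀ n, #(step^[n] Y) ≤ μ := fun n => by
    induction n with
    | zero => exact hY
    | succ n ih => rw [Function.iterate_succ_apply']; exact card_step _ ih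
  refine ⟨⋃ n : ULift.{v} ℕ, step^[n.down] Y, Set.subset_iUnion_of_subset ⟨0⟩ le_rfl, ?_, ?_⟩
  · refine (mk_iUnion_le _).trans <| mul_le_of_le hμ (by simpa using hμ) <| ciSup_le' fun n => ?_
    exact card_iterate n.down
  · intro a ha
    obtain ⟨n, hn⟩ := Set.mem_iUnion.mp ha
    refine Set.subset_iUnion_of_subset ⟨n.down + 1⟩ ?_
    rw [Function.iterate_succ_apply']
    exact Set.subset_union_of_subset_right (Set.subset_biUnion_of_mem hn) _

namespace Module

section Retract

variable {R : Type*} [Ring R] {Q F : Type*} [AddCommGroup Q] [Module R Q] [AddCommGroup F]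
  [Module R F] {p : F →ₗ[R] Q} {s : Q →ₗ[R] F} (hps : Function.LeftInverse p s)
  {N : Submodule R F} (hN : N.map p ≤ N.comap s)
include hps hN

theorem comap_eq_map_of_leftInverse : N.comap s = N.map p :=
  le_antisymm (fun q hq => ⟨s q, hq, hps q⟩) hN

theorem projective_comap_of_leftInverse [Projective R N] : Projective R (N.comap s) :=
  Projective.of_split (s.restrict fun _ hq => hq) (p.restrict fun x hx => hN ⟨x, hx, rfl⟩)
    (LinearMap.ext fun q => Subtype.ext (hps q))

theorem projective_quotient_comap_of_leftInverse [Projective R (F ⧸ N)] :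
    Projective R (Q ⧸ N.comap s) :=
  Projective.of_split ((N.comap s).mapQ N s le_rfl)
    (N.mapQ (N.comap s) p fun x hx => hN ⟨x, hx, rfl⟩)
    (Submodule.linearMap_qext _ <| LinearMap.ext fun q => by simp [hps q])

end Retract

section Finsupp

variable {R : Type*} [Ring R] {α : Type*}

instance projective_supported (K : Set α) : Projective R (Finsupp.supported R R K) :=
  Projective.of_equiv (Finsupp.supportedEquivFinsupp K).symm

instance projective_quotient_supported (K : Set α) :
    Projective R ((α →₀ R) ⧸ Finsupp.supported R R K) :=
  have hK : IsCompl (Finsupp.supported R R K) (Finsupp.supported R R Kᶜ) :=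
    ⟨Finsupp.disjoint_supported_supported isCompl_compl.disjoint,
      Finsupp.codisjoint_supported_supported isCompl_compl.codisjoint⟩
  Projective.of_equiv
    ((Submodule.quotientEquivOfIsCompl _ _ hK).trans (Finsupp.supportedEquivFinsupp Kᶜ)).symm

end Finsupp

theorem projective_span_of_support_subset {R : Type*} [Ring R] {Q : Type*} [AddCommGroup Q]
    [Module R Q] {s : Q →ₗ[R] Q →₀ R}
    (hs : Function.LeftInverse (Finsupp.linearCombination R id) s) {K : Set Q}
    (hK : ∀ q ∈ K, ↑(s q).support ⊆ K) :
    Projective R (Submodule.span R K) ∧ Projective R (Q ⧸ Submodule.span R K) := by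
  have hspan : (Finsupp.supported R R K).map (Finsupp.linearCombination R id) =
      Submodule.span R K := by
    rw [← Finsupp.span_image_eq_map_linearCombination, Set.image_id]
  have hN : (Finsupp.supported R R K).map (Finsupp.linearCombination R id) ≤
      (Finsupp.supported R R K).comap s :=
    hspan ▸ Submodule.span_le.mpr fun q hq => (Finsupp.mem_supported R _).mpr (hK q hq)
  rw [← hspan, ← comap_eq_map_of_leftInverse hs hN]
  exact ⟨projective_comap_of_leftInverse hs hN, projective_quotient_comap_of_leftInverse hs hN⟩

end Module

theorem exists_projective_submodule_of_card_le {R : Type u} [Ring R] {Q : Type v}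
    [AddCommGroup Q] [Module R Q] (hQ : Module.Projective R Q)
    (μ : Cardinal.{v}) (hμ : Cardinal.aleph0 ≤ μ) (Y : Set Q) (hY : #Y ≤ μ) :
    ∃ Q' : Submodule R Q, Y ⊆ (Q' : Set Q) ∧
      (∃ S : Set Q, S ⊆ (Q' : Set Q) ∧ #S ≤ μ ∧ Submodule.span R S = Q') ∧
      Module.Projective R Q' ∧ Module.Projective R (Q ⧸ Q') := by
  obtain ⟨s, hs⟩ := Module.projective_def.mp hQ
  obtain ⟨K, hYK, hKμ, hK⟩ := exists_superset_card_le_forall_subset hμ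
    (fun q => ↑(s q).support) (fun q => (finset_card_lt_aleph0 _).le.trans hμ) hY
  obtain ⟨hproj, hproj_quot⟩ := Module.projective_span_of_support_subset hs hK
  exact ⟨Submodule.span R K, hYK.trans Submodule.subset_span,
    ⟨K, Submodule.subset_span, hKμ, rfl⟩, hproj, hproj_quot⟩
end

section
/- Let R be an associative unital ring, μ an infinite cardinal, and A, B, C left R-modules with B ≤μ-generated. Let f : A → B and g : B → C be R-linear maps with im(f) = ker(g). Suppose there exist a projective R-module Q and an R-linear map σ : B → Q with σ ∘ f = 0 such that σ ≠ τ ∘ g for every R-linear τ : C → Q. Then there exist a projective R-module Q′ that is ≤μ-generated and an R-linear map σ′ : B → Q′ with σ′ ∘ f = 0 such that σ′ ≠ τ ∘ g for every R-linear τ : C → Q′. -/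
/-!
STATEMENT 6: if `B` is `≤μ`-generated, `im f = ker g`, and some projective module `Q`
witnesses non-exactness of the `Hom(-,Q)` sequence at `Hom(B,Q)` (i.e. there is
`σ : B →ₗ Q` with `σ ∘ f = 0` which does not factor through `g`), then some
`≤μ`-generated projective module `Q'` also witnesses this.
-/

universe u v

open Cardinal

theorem exists_small_projective_witness {R : Type u} [Ring R] (μ : Cardinal.{v})
    (hμ : Cardinal.aleph0 ≤ μ)
    {A B C : Type v} [AddCommGroup A] [Module R A] [AddCommGroup B] [Module R B]
    [AddCommGroup C] [Module R C]
    (hB : ∃ S : Set B, #S ≤ μ ∧ Submodule.span R S = ⊤)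
    (f : A →ₗ[R] B) (g : B →ₗ[R] C) (hfg : LinearMap.range f = LinearMap.ker g)
    (Q : Type v) [AddCommGroup Q] [Module R Q] (hQ : Module.Projective R Q)
    (σ : B →ₗ[R] Q) (hσf : σ.comp f = 0) (hσ : ∀ τ : C →ₗ[R] Q, σ ≠ τ.comp g) :
    ∃ (Q' : Type v) (_ : AddCommGroup Q') (_ : Module R Q'),
      Module.Projective R Q' ∧ (∃ S : Set Q', #S ≤ μ ∧ Submodule.span R S = ⊤) ∧
      ∃ σ' : B →ₗ[R] Q', σ'.comp f = 0 ∧ ∀ τ : C →ₗ[R] Q', σ' ≠ τ.comp g := by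
  obtain ⟨S, hScard, hSspan⟩ := hB
  obtain ⟨s, hs⟩ := (Module.projective_def).1 hQ
  -- iterated closure
  let J : ℕ → Set Q := fun n => Nat.rec (σ '' S) (fun _ Jn => Jn ∪ ⋃ q ∈ Jn, ↑(s q).support) n
  have hJmono : ∀ n, J n ⊆ J (n + 1) := fun n => Set.subset_union_left
  have hJcard : ∀ n, #↥(J n) ≤ μ := by
    intro n
    induction n with
    | zero => exact (Cardinal.mk_image_le.trans hScard)
    | succ n ih =>
      have h1 : #(⋃ q ∈ J n, ↑(s q).support : Set Q) ≤ μ := by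
        refine (Cardinal.mk_biUnion_le _ _).trans ?_
        have h2 : ⨆ q : J n, #(↑(s q.1).support : Set Q) ≤ ℵ₀ := by
          exact ciSup_le' fun q => (lt_aleph0_of_finite _).le
        calc #↥(J n) * ⨆ q : J n, #(↑(s q.1).support : Set Q) ≤ μ * ℵ₀ :=
              mul_le_mul' ih h2
          _ ≤ μ * μ := mul_le_mul_right hμ μ
          _ = μ := Cardinal.mul_eq_self hμ
      exact (Cardinal.mk_union_le _ _).trans (by
        calc #↥(J n) + #(⋃ q ∈ J n, ↑(s q).support : Set Q) ≤ μ + μ := add_le_add ih h1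
          _ = μ := Cardinal.add_eq_self hμ)
  let Jω : Set Q := ⋃ n, J n
  have hJωcard : #↥Jω ≤ μ := by
    have : Jω = ⋃ m : ULift.{v} ℕ, J m.down := by
      ext x; simp [Jω, Set.mem_iUnion]
    rw [this]
    refine (Cardinal.mk_iUnion_le _).trans ?_
    calc #(ULift.{v} ℕ) * ⨆ m : ULift.{v} ℕ, #↥(J m.down) ≤ ℵ₀ * μ := by
          refine mul_le_mul' ?_ (ciSup_le' fun m => hJcard m.down)
          rw [Cardinal.mk_uLift, Cardinal.mk_nat, Cardinal.lift_aleph0]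
      _ ≤ μ * μ := mul_le_mul_left hμ μ
      _ = μ := Cardinal.mul_eq_self hμ
  have hJωclosed : ∀ q ∈ Jω, (↑(s q).support : Set Q) ⊆ Jω := by
    intro q hq
    obtain ⟨n, hn⟩ := Set.mem_iUnion.1 hq
    intro x hx
    exact Set.mem_iUnion.2 ⟨n + 1, Or.inr (Set.mem_biUnion hn hx)⟩
  set N : Submodule R Q := Submodule.span R Jω with hN
  -- s maps N into supported
  have hsN : ∀ x ∈ N, s x ∈ Finsupp.supported R R Jω := by
    intro x hx
    refine Submodule.span_induction (fun q hq => ?_) (by simp) (fun a b _ _ ha hb => by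
      rw [map_add]; exact Submodule.add_mem _ ha hb)
      (fun r a _ ha => by rw [map_smul]; exact Submodule.smul_mem _ r ha) hx
    exact (Finsupp.mem_supported R _).2 (hJωclosed q hq)
  -- total maps supported into N
  have htot : ∀ x ∈ Finsupp.supported R R Jω, Finsupp.linearCombination R (id : Q → Q) x ∈ N := by
    intro x hx
    have hx' := (Finsupp.mem_supported R x).1 hx
    rw [Finsupp.linearCombination_apply, Finsupp.sum]
    refine Submodule.sum_mem _ fun q hq => Submodule.smul_mem _ _ ?_
    exact Submodule.subset_span (hx' hq)
  let i : N →ₗ[R] Finsupp.supported R R Jω :=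
    (s.comp N.subtype).codRestrict _ (fun x => hsN x.1 x.2)
  let r : Finsupp.supported R R Jω →ₗ[R] N :=
    ((Finsupp.linearCombination R (id : Q → Q)).comp
      (Finsupp.supported R R Jω).subtype).codRestrict _ (fun x => htot x.1 x.2)
  have hri : r.comp i = LinearMap.id := by
    ext x
    exact hs x.1
  have hNfree : Module.Projective R (Finsupp.supported R R Jω) :=
    Module.Projective.of_equiv (Finsupp.supportedEquivFinsupp Jω).symm
  have hNproj : Module.Projective R N := Module.Projective.of_split i r hri
  -- σ lands in N
  have hσN : ∀ b, σ b ∈ N := by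
    intro b
    have : σ b ∈ Submodule.map σ ⊤ := ⟨b, trivial, rfl⟩
    rw [← hSspan, Submodule.map_span] at this
    refine Submodule.span_mono ?_ this
    intro x hx
    exact Set.mem_iUnion.2 ⟨0, hx⟩
  refine ⟨N, inferInstance, inferInstance, hNproj, ?_, ?_⟩
  · refine ⟨Subtype.val ⁻¹' Jω, ?_, ?_⟩
    · exact (Cardinal.mk_preimage_of_injective _ _ Subtype.val_injective).trans hJωcard
    · apply Submodule.map_injective_of_injective N.injective_subtype
      rw [Submodule.map_span, Submodule.map_top, Submodule.range_subtype]
      congr 1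
      show Subtype.val '' (Subtype.val ⁻¹' Jω) = Jω
      rw [Set.image_preimage_eq_inter_range]
      ext x
      simp only [Set.mem_inter_iff, Subtype.range_coe_subtype, SetLike.mem_coe]
      exact ⟨fun h => h.1, fun h => ⟨h, Submodule.subset_span h⟩⟩
  · refine ⟨σ.codRestrict N hσN, ?_, ?_⟩
    · ext a
      simpa using LinearMap.congr_fun hσf a
    · intro τ hτ
      apply hσ (N.subtype.comp τ)
      ext b
      have := congrFun (congrArg DFunLike.coe hτ) b
      calc σ b = ((σ.codRestrict N hσN) b : Q) := rfl
        _ = ((τ.comp g) b : Q) := by rw [this]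
        _ = ((N.subtype.comp τ).comp g) b := rfl
end

section
/- Let R be an associative unital ring, (M_n, f_n)_{n∈ℤ} a complex of left R-modules, and μ an infinite cardinal such that each M_n is ≤μ-generated. Then the complex is Hom_R(−,Q)-exact for every projective R-module Q if and only if it is Hom_R(−,Q)-exact for every projective R-module Q that is ≤μ-generated. -/
/-!
STATEMENT 7: a complex of `≤μ`-generated modules is `Hom_R(-,Q)`-exact for every
projective module `Q` iff it is `Hom_R(-,Q)`-exact for every `≤μ`-generated
projective module `Q`.
-/

universe u v

open Cardinal

/-- A complex `(M n, f n)_{n ∈ ℤ}` is `Hom_R(-,X)`-exact if for every `n` and every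
linear `σ : M (n+1) →ₗ X` with `σ ∘ f n = 0` there is `τ : M (n+2) →ₗ X` with
`σ = τ ∘ f (n+1)`. -/
def IsHomExact {R : Type u} [Ring R] {M : ℤ → Type v} [∀ n, AddCommGroup (M n)]
    [∀ n, Module R (M n)] (f : ∀ n, M n →ₗ[R] M (n + 1))
    (X : Type v) [AddCommGroup X] [Module R X] : Prop :=
  ∀ n : ℤ, ∀ σ : M (n + 1) →ₗ[R] X, σ.comp (f n) = 0 →
    ∃ τ : M (n + 1 + 1) →ₗ[R] X, σ = τ.comp (f (n + 1))

section Aux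
variable {R : Type u} [Ring R] {Q : Type v} [AddCommGroup Q] [Module R Q]

/-- one closure step -/
private def stepSet (s : Q →ₗ[R] Q →₀ R) (A : Set Q) : Set Q :=
  A ∪ ⋃ a : A, ((s a).support : Set Q)

private theorem stepSet_card (s : Q →ₗ[R] Q →₀ R) (μ : Cardinal.{v})
    (hμ : Cardinal.aleph0 ≤ μ) (A : Set Q) (hA : #A ≤ μ) : #(stepSet s A) ≤ μ := by
  refine (Cardinal.mk_union_le _ _).trans ?_
  have h2 : #(⋃ a : A, ((s a).support : Set Q)) ≤ μ := by
    refine (Cardinal.mk_iUnion_le _).trans ?_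
    have : ⨆ a : A, #(((s a).support : Set Q)) ≤ ℵ₀ :=
      ciSup_le' fun a => Cardinal.mk_le_aleph0
    calc #A * ⨆ a : A, #(((s a).support : Set Q)) ≤ μ * ℵ₀ := mul_le_mul' hA this
      _ ≤ μ * μ := mul_le_mul' le_rfl hμ
      _ = μ := Cardinal.mul_eq_self hμ
  calc #A + _ ≤ μ + μ := add_le_add hA h2
    _ = μ := Cardinal.add_eq_self hμ

/-- Key lemma: any map `σ` from a `≤μ`-generated module to a projective module `Q`
factors (pointwise) through a `≤μ`-generated projective submodule of `Q`. -/
theorem exists_small_projective_submodule [Module.Projective R Q]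
    (μ : Cardinal.{v}) (hμ : Cardinal.aleph0 ≤ μ)
    (S₀ : Set Q) (hS₀ : #S₀ ≤ μ) :
    ∃ Q' : Submodule R Q, Module.Projective R Q' ∧
      (∃ S : Set Q', #S ≤ μ ∧ Submodule.span R S = ⊤) ∧ S₀ ⊆ Q' := by
  obtain ⟨s, hs⟩ := (Module.projective_def).mp ‹Module.Projective R Q›
  set π : (Q →₀ R) →ₗ[R] Q := Finsupp.linearCombination R id with hπ
  -- the closure
  set T : Set Q := ⋃ k : ULift.{v} ℕ, (stepSet s)^[k.down] S₀ with hT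
  have hTcard : #T ≤ μ := by
    refine (Cardinal.mk_iUnion_le _).trans ?_
    have h1 : #(ULift.{v} ℕ) ≤ μ := by
      simpa using hμ
    have h2 : ⨆ k : ULift.{v} ℕ, #((stepSet s)^[k.down] S₀) ≤ μ := by
      refine ciSup_le' fun k => ?_
      induction k.down with
      | zero => simpa using hS₀
      | succ m ih => rw [Function.iterate_succ_apply']; exact stepSet_card s μ hμ _ ih
    calc _ ≤ μ * μ := mul_le_mul' h1 h2
      _ = μ := Cardinal.mul_eq_self hμ
  have hS₀T : S₀ ⊆ T := by
    intro x hx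
    exact Set.mem_iUnion.2 ⟨⟨0⟩, hx⟩
  have hTclosed : ∀ t ∈ T, ((s t).support : Set Q) ⊆ T := by
    intro t ht
    obtain ⟨k, hk⟩ := Set.mem_iUnion.1 ht
    intro x hx
    refine Set.mem_iUnion.2 ⟨⟨k.down + 1⟩, ?_⟩
    rw [Function.iterate_succ_apply']
    exact Or.inr (Set.mem_iUnion.2 ⟨⟨t, hk⟩, hx⟩)
  refine ⟨Submodule.span R T, ?_, ?_, fun x hx => Submodule.subset_span (hS₀T hx)⟩
  · -- projectivity
    set Q' := Submodule.span R T
    set F' := Finsupp.supported R R T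
    have hsF : ∀ q ∈ Q', s q ∈ F' := by
      intro q hq
      have : Q' ≤ F'.comap s := by
        rw [Submodule.span_le]
        intro t ht
        exact hTclosed t ht
      exact this hq
    have hπQ : ∀ y ∈ F', π y ∈ Q' := by
      intro y hy
      have : Finsupp.supported R R T ≤ Q'.comap π := by
        rw [Finsupp.supported_eq_span_single, Submodule.span_le]
        rintro - ⟨t, ht, rfl⟩
        have : π (Finsupp.single t 1) = t := by simp [hπ]
        simpa [Submodule.mem_comap, this] using Submodule.subset_span ht
      exact this hy
    let s₂ : Q' →ₗ[R] F' := (s ∘ₗ Q'.subtype).codRestrict F' fun c => hsF _ c.2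
    let π₂ : F' →ₗ[R] Q' := (π ∘ₗ F'.subtype).codRestrict Q' fun c => hπQ _ c.2
    have hF'proj : Module.Projective R F' :=
      Module.Projective.of_equiv (Finsupp.supportedEquivFinsupp (R := R) (M := R) T).symm
    refine Module.Projective.of_split s₂ π₂ ?_
    ext x
    simpa [s₂, π₂] using hs x.1
  · -- small generation
    refine ⟨{x : Submodule.span R T | (x : Q) ∈ T}, ?_, Submodule.span_setOf_mem_eq_top⟩
    refine le_trans ?_ hTcard
    exact Cardinal.mk_le_of_injective
      (f := fun x : {x : Submodule.span R T | (x : Q) ∈ T} => (⟨x.1.1, x.2⟩ : T))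
      fun a b h => by
        apply Subtype.ext; apply Subtype.ext
        exact congrArg (fun y : T => (y : Q)) h

end Aux

theorem homExact_proj_iff_homExact_small_proj {R : Type u} [Ring R]
    {M : ℤ → Type v} [∀ n, AddCommGroup (M n)] [∀ n, Module R (M n)]
    (f : ∀ n, M n →ₗ[R] M (n + 1)) (hcomplex : ∀ n, (f (n + 1)).comp (f n) = 0)
    (μ : Cardinal.{v}) (hμ : Cardinal.aleph0 ≤ μ)
    (hgen : ∀ n, ∃ S : Set (M n), #S ≤ μ ∧ Submodule.span R S = ⊤) :
    (∀ (Q : Type v) [AddCommGroup Q] [Module R Q],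
        Module.Projective R Q → IsHomExact f Q) ↔
      (∀ (Q : Type v) [AddCommGroup Q] [Module R Q],
        Module.Projective R Q → (∃ S : Set Q, #S ≤ μ ∧ Submodule.span R S = ⊤) →
          IsHomExact f Q) := by
  constructor
  · intro h Q _ _ hQ _; exact h Q hQ
  · intro h Q _ _ hQ n σ hσ
    obtain ⟨S, hScard, hSspan⟩ := hgen (n + 1)
    have hS₀ : #(σ '' S) ≤ μ := (Cardinal.mk_image_le).trans hScard
    obtain ⟨Q', hQ'proj, hQ'gen, hS₀Q'⟩ :=
      exists_small_projective_submodule (R := R) (Q := Q) μ hμ (σ '' S) hS₀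
    have hσmem : ∀ x, σ x ∈ Q' := by
      intro x
      have hle : LinearMap.range σ ≤ Q' := by
        rw [LinearMap.range_eq_map, ← hSspan, Submodule.map_span, Submodule.span_le]
        exact fun y hy => hS₀Q' hy
      exact hle ⟨x, rfl⟩
    let σ' : M (n + 1) →ₗ[R] Q' := σ.codRestrict Q' hσmem
    have hσ'0 : σ'.comp (f n) = 0 := by
      ext x
      have h0 : σ ((f n) x) = 0 := by
        simpa using congrFun (congrArg DFunLike.coe hσ) x
      simpa [σ'] using h0
    obtain ⟨τ', hτ'⟩ := h Q' hQ'proj hQ'gen n σ' hσ'0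
    refine ⟨Q'.subtype.comp τ', ?_⟩
    ext x
    have h2 := congrArg Subtype.val (congrFun (congrArg DFunLike.coe hτ') x)
    simpa [σ'] using h2
end

section
/- Let R be an associative unital ring, ι a linearly ordered set, F a free left R-module with basis (b_i)_{i∈ι}, G a submodule of F, and α ∈ ι. Put G_{≤α} := G ∩ span_R{b_i : i ≤ α} and G_{<α} := G ∩ span_R{b_i : i < α}. Then there exists an injective R-linear map from the quotient module G_{≤α}/G_{<α} into R (viewed as a left module over itself); in particular this quotient is isomorphic to a left ideal of R. -/
/-!
The `α`-th coordinate functional of the basis, restricted to `G_{≤α}`, vanishes exactly on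
`G_{<α}`: a vector supported on `{i ≤ α}` is supported on `{i < α}` iff its `α`-th coordinate
is zero. It therefore descends to an injective map `G_{≤α}/G_{<α} → R`.
-/

universe u v w

namespace Module.Basis

variable {R : Type u} [Ring R] {ι : Type w} [LinearOrder ι] {F : Type v} [AddCommGroup F]
  [Module R F]

theorem mem_span_image_lt_iff_repr_eq_zero (b : Basis ι R F) {α : ι} {x : F}
    (hx : x ∈ Submodule.span R (b '' {i | i ≤ α})) :
    x ∈ Submodule.span R (b '' {i | i < α}) ↔ b.repr x α = 0 := by
  rw [b.mem_span_image]
  constructor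
  · intro hlt
    by_contra hne
    exact lt_irrefl α (hlt (Finsupp.mem_support_iff.2 hne))
  · intro hα i hi
    have hle : i ≤ α := b.mem_span_image.1 hx hi
    refine lt_of_le_of_ne hle ?_
    rintro rfl
    exact Finsupp.mem_support_iff.1 hi hα

theorem ker_coord_comp_subtype_inf_span_le (b : Basis ι R F) (G : Submodule R F) (α : ι) :
    LinearMap.ker ((b.coord α).comp (G ⊓ Submodule.span R (b '' {i | i ≤ α})).subtype) =
      Submodule.comap (G ⊓ Submodule.span R (b '' {i | i ≤ α})).subtype
        (G ⊓ Submodule.span R (b '' {i | i < α})) := by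
  ext ⟨x, hxG, hxle⟩
  simp only [LinearMap.mem_ker, LinearMap.comp_apply, Submodule.coe_subtype, coord_apply,
    Submodule.mem_comap, Submodule.mem_inf, b.mem_span_image_lt_iff_repr_eq_zero hxle]
  exact (and_iff_right hxG).symm

end Module.Basis

theorem exists_injective_linearMap_to_ring {R : Type u} [Ring R] {ι : Type w}
    [LinearOrder ι] {F : Type v} [AddCommGroup F] [Module R F] (b : Module.Basis ι R F)
    (G : Submodule R F) (α : ι) :
    ∃ φ : (↥(G ⊓ Submodule.span R (⇑b '' {i : ι | i ≤ α})) ⧸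
        (Submodule.comap
          (G ⊓ Submodule.span R (⇑b '' {i : ι | i ≤ α})).subtype
          (G ⊓ Submodule.span R (⇑b '' {i : ι | i < α})))) →ₗ[R] R,
      Function.Injective φ := by
  have hker := b.ker_coord_comp_subtype_inf_span_le G α
  refine ⟨Submodule.liftQ _ _ hker.ge, ?_⟩
  rw [← LinearMap.ker_eq_bot]
  exact Submodule.ker_liftQ_eq_bot _ _ _ hker.le
end

section
/- Let κ be an infinite regular cardinal and R an associative unital ring that is <κ-Noetherian. Then every submodule of a free left R-module having a basis of cardinality less than κ is <κ-generated. -/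
/-!
Filter `G` along the finite coordinate subspaces `span (b '' s)`. Adding one coordinate `i`
to `s` is an extension: the kernel of `b.coord i` on `G ⊓ span (b '' insert i s)` is
`G ⊓ span (b '' s)`, and its image is a left ideal, hence `<κ`-generated. So by induction each
`G ⊓ span (b '' s)` is `<κ`-generated, and `G` is the union of these `< κ` many submodules,
which is `<κ`-generated by regularity of `κ`.
-/

universe u

open Cardinal Submodule

namespace Submodule

section Semiring

variable {R : Type*} {M : Type u} [Semiring R] [AddCommMonoid M] [Module R M]

theorem spanRank_lt_iff_exists_span_set_card_lt (p : Submodule R M) {a : Cardinal.{u}} :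
    p.spanRank < a ↔ ∃ s : Set M, #s < a ∧ span R s = p := by
  refine ⟨fun h => ?_, fun ⟨s, hs, hsp⟩ => hsp ▸ (spanRank_span_le_card s).trans_lt hs⟩
  obtain ⟨s, hs, hsp⟩ := p.exists_span_set_card_eq_spanRank
  exact ⟨s, hs ▸ h, hsp⟩

theorem spanRank_iSup_le_sum_spanRank {ι : Type u} (p : ι → Submodule R M) :
    (⨆ i, p i).spanRank ≤ sum fun i => (p i).spanRank :=
  calc (⨆ i, p i).spanRank = (span R (⋃ i, (p i).generators)).spanRank := by
        simp only [span_iUnion, span_generators]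
    _ ≤ #(⋃ i, (p i).generators) := spanRank_span_le_card _
    _ ≤ sum fun i => #(p i).generators := mk_iUnion_le_sum_mk
    _ = sum fun i => (p i).spanRank := by simp only [generators_card]

end Semiring

theorem spanRank_le_spanRank_map_add_spanRank_inf_ker {R : Type*} {M : Type u} [Ring R]
    [AddCommGroup M] [Module R M] {P : Type u} [AddCommGroup P] [Module R P]
    (f : M →ₗ[R] P) (p : Submodule R M) :
    p.spanRank ≤ (p.map f).spanRank + (p ⊓ LinearMap.ker f).spanRank := by
  obtain ⟨t, ht, hspan⟩ := (p.map f).exists_span_set_card_eq_spanRank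
  have hlift (y : t) : ∃ x ∈ p, f x = y := mem_map.1 (hspan ▸ subset_span y.2)
  choose g hgp hgf using hlift
  set T := span R (Set.range g)
  have hTp : T ≤ p := span_le.2 (Set.range_subset_iff.2 hgp)
  have hTmap : T.map f = p.map f := by
    rw [map_span, ← Set.range_comp, show f ∘ g = Subtype.val from funext hgf, Subtype.range_coe,
      hspan]
  have hp : p = T ⊔ p ⊓ LinearMap.ker f := by
    rw [inf_comm p, ← sup_inf_assoc_of_le _ hTp, eq_comm, inf_eq_right]
    exact (LinearMap.map_le_map_iff f).1 hTmap.ge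
  calc p.spanRank = (T ⊔ p ⊓ LinearMap.ker f).spanRank := by rw [← hp]
    _ ≤ T.spanRank + (p ⊓ LinearMap.ker f).spanRank := spanRank_sup_le_sum_spanRank
    _ ≤ (p.map f).spanRank + (p ⊓ LinearMap.ker f).spanRank := by
      gcongr
      calc T.spanRank ≤ #(Set.range g) := spanRank_span_le_card _
        _ ≤ #t := mk_range_le
        _ = (p.map f).spanRank := ht

end Submodule

theorem Cardinal.mk_finset_lt {α : Type u} {κ : Cardinal.{u}} (hκ : ℵ₀ ≤ κ) (hα : #α < κ) :
    #(Finset α) < κ := by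
  rcases finite_or_infinite α with hfin | hinf
  · exact (lt_aleph0_of_finite _).trans_le hκ
  · rwa [mk_finset_of_infinite]

namespace Module.Basis

variable {ι R M : Type*} [Ring R] [AddCommGroup M] [Module R M] (b : Basis ι R M)

theorem span_image_insert_inf_ker_coord {i : ι} {s : Set ι} (hi : i ∉ s) :
    span R (b '' insert i s) ⊓ LinearMap.ker (b.coord i) = span R (b '' s) := by
  apply le_antisymm
  · intro x hx
    obtain ⟨hx, hxi⟩ := mem_inf.1 hx
    rw [b.mem_span_image] at hx ⊢
    intro j hj
    have hji : j ≠ i := by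
      rintro rfl
      exact Finsupp.mem_support_iff.1 hj (LinearMap.mem_ker.1 hxi)
    exact (hx hj).resolve_left hji
  · refine le_inf (span_mono (Set.image_mono (Set.subset_insert i s))) (span_le.2 ?_)
    rintro _ ⟨j, hj, rfl⟩
    simp [show j ≠ i from ne_of_mem_of_not_mem hj hi]

theorem iSup_inf_span_image_finset (G : Submodule R M) :
    ⨆ s : Finset ι, G ⊓ span R (b '' s) = G :=
  le_antisymm (iSup_le fun _ => inf_le_left) fun x hx =>
    mem_iSup_of_mem (b.repr x).support ⟨hx, b.mem_span_repr_support x⟩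

theorem spanRank_inf_span_image_finset_lt {R M : Type u} [Ring R] [AddCommGroup M] [Module R M]
    (b : Basis ι R M) {κ : Cardinal.{u}} (hκ : ℵ₀ ≤ κ)
    (hR : ∀ I : Submodule R R, I.spanRank < κ) (G : Submodule R M) (s : Finset ι) :
    (G ⊓ span R (b '' s)).spanRank < κ := by
  classical
  induction s using Finset.induction with
  | empty =>
    rw [Finset.coe_empty, Set.image_empty, span_empty, inf_bot_eq,
      spanRank_eq_zero_iff_eq_bot.2 rfl]
    exact aleph0_pos.trans_le hκ
  | @insert i s hi ih =>
    have hker : G ⊓ span R (b '' ↑(insert i s)) ⊓ LinearMap.ker (b.coord i) =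
        G ⊓ span R (b '' s) := by
      rw [inf_assoc, Finset.coe_insert, b.span_image_insert_inf_ker_coord (by simpa using hi)]
    refine (spanRank_le_spanRank_map_add_spanRank_inf_ker (b.coord i) _).trans_lt ?_
    rw [hker]
    exact add_lt_of_lt hκ (hR _) ih

end Module.Basis

theorem submodule_small_generated_of_ltKappa_noetherian {R : Type u} [Ring R]
    (κ : Cardinal.{u}) (hκ : κ.IsRegular)
    (hNoeth : ∀ I : Submodule R R, ∃ S : Set R, #S < κ ∧ Submodule.span R S = I)
    {ι : Type u} {F : Type u} [AddCommGroup F] [Module R F] (b : Module.Basis ι R F)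
    (hι : #ι < κ) (G : Submodule R F) :
    ∃ S : Set F, #S < κ ∧ Submodule.span R S = G := by
  have hR (I : Submodule R R) : I.spanRank < κ :=
    (I.spanRank_lt_iff_exists_span_set_card_lt).2 (hNoeth I)
  rw [← G.spanRank_lt_iff_exists_span_set_card_lt, ← b.iSup_inf_span_image_finset G]
  exact (spanRank_iSup_le_sum_spanRank _).trans_lt <|
    sum_lt_of_isRegular hκ (mk_finset_lt hκ.aleph0_le hι)
      (b.spanRank_inf_span_image_finset_lt hκ.aleph0_le hR G)
end
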